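/- Let b ≥ 2 be an integer. Suppose there exist a covering system {r_i (mod m_i) : 1 ≤ i ≤ ν} of the integers and pairwise distinct primes p_1, …, p_ν such that p_i divides b^{m_i} − 1 for each 1 ≤ i ≤ ν. Then there exist infinitely many positive integers k such that k·b^n + 1 is composite for all positive integers n. -/

import Mathlib

/-!
By the Chinese remainder theorem there are infinitely many `k > max pᵢ` with
`k ≡ -b^{-rᵢ} (mod pᵢ)` for every `i`. Given `n`, choose `i` with `n ≡ rᵢ (mod mᵢ)`; since
`b^{mᵢ} ≡ 1 (mod pᵢ)` we get `b^n ≡ b^{rᵢ}`, so `pᵢ ∣ k b^n + 1`, and `k b^n + 1 > k > pᵢ`.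
-/

/-- An integer `m` is composite if `m > 1` and `m` is not prime. -/
def IsComposite (m : ℤ) : Prop := 1 < m ∧ ¬ Prime m

open Finset Filter Function

theorem frequently_forall_natCast_eq {ι : Type*} [Fintype ι] {q : ι → ℕ} [∀ i, NeZero (q i)]
    (hq : Pairwise (Nat.Coprime on q)) (t : ∀ i, ZMod (q i)) :
    ∃ᶠ k : ℕ in atTop, ∀ i, (k : ZMod (q i)) = t i := by
  obtain ⟨x, rfl⟩ := (ZMod.prodEquivPi q hq).surjective t
  have : NeZero (∏ i, q i) := ⟨prod_ne_zero_iff.mpr fun i _ => NeZero.ne (q i)⟩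
  refine (Nat.frequently_mod_eq x.val_lt).mono fun k hk i => ?_
  have hkx : (k : ZMod (∏ i, q i)) = x := by
    rw [← ZMod.natCast_mod, hk, ZMod.natCast_zmod_val]
  simp [← hkx]

theorem dvd_mul_pow_add_one_of_modEq {q k m r n : ℕ} {b : ℤ} (hm : 1 ≤ m)
    (hbm : (q : ℤ) ∣ b ^ m - 1) (hk : (k : ZMod q) = -(b : ZMod q) ^ ((m - 1) * r))
    (hn : n ≡ r [MOD m]) : (q : ℤ) ∣ k * b ^ n + 1 := by
  have hb : (b : ZMod q) ^ m = 1 := by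
    rw [← sub_eq_zero]
    exact_mod_cast (ZMod.intCast_zmod_eq_zero_iff_dvd _ q).mpr hbm
  have hexp : (m - 1) * r + r = m * r := by
    rw [← Nat.succ_mul, Nat.succ_eq_add_one, Nat.sub_add_cancel hm]
  rw [← ZMod.intCast_zmod_eq_zero_iff_dvd]
  push_cast
  rw [hk, pow_eq_pow_of_modEq hn hb, neg_mul, ← pow_add, hexp, pow_mul, hb, one_pow,
    neg_add_cancel]

theorem isComposite_of_dvd {d N : ℤ} (hd : 1 < d) (hdN : d ∣ N) (hlt : d < N) :
    IsComposite N := by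
  refine ⟨hd.trans hlt, fun hN => ?_⟩
  rcases (Int.prime_iff_natAbs_prime.mp hN).eq_one_or_self_of_dvd _
    (Int.natAbs_dvd_natAbs.mpr hdN) with h | h <;> omega

theorem infinitely_many_k_of_covering
    (b : ℤ) (hb : 2 ≤ b) (ν : ℕ) (r : Fin ν → ℕ) (m : Fin ν → ℕ)
    (hm : ∀ i, 1 ≤ m i)
    (hcov : ∀ n : ℤ, ∃ i, n ≡ (r i : ℤ) [ZMOD (m i : ℤ)])
    (p : Fin ν → ℕ) (hp : ∀ i, (p i).Prime)
    (hinj : Function.Injective p)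
    (hdvd : ∀ i, (p i : ℤ) ∣ b ^ (m i) - 1) :
    {k : ℤ | 0 < k ∧ ∀ n : ℕ, 0 < n → IsComposite (k * b ^ n + 1)}.Infinite := by
  have : ∀ i, NeZero (p i) := fun i => ⟨(hp i).ne_zero⟩
  have hcop : Pairwise (Nat.Coprime on p) := fun i j hij =>
    (Nat.coprime_primes (hp i) (hp j)).mpr (hinj.ne hij)
  -- `b ^ ((m i - 1) * r i)` inverts `b ^ r i` modulo `p i`, because `b ^ m i ≡ 1`.
  let t i : ZMod (p i) := -(b : ZMod (p i)) ^ ((m i - 1) * r i)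
  have hk := (frequently_forall_natCast_eq hcop t).and_eventually
    (eventually_gt_atTop (univ.sup p))
  refine ((Nat.frequently_atTop_iff_infinite.mp hk).image Nat.cast_injective.injOn).mono ?_
  rintro _ ⟨k, ⟨hkt, hkp⟩, rfl⟩
  refine ⟨by omega, fun n _ => ?_⟩
  obtain ⟨i, hi⟩ := hcov n
  have hpk : p i < k := (le_sup (mem_univ i)).trans_lt hkp
  refine isComposite_of_dvd (by exact_mod_cast (hp i).one_lt)
    (dvd_mul_pow_add_one_of_modEq (hm i) (hdvd i) (hkt i) (Int.natCast_modEq_iff.mp hi)) ?_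
  have : 1 ≤ b ^ n := one_le_pow₀ (by omega)
  nlinarith
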